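/- arXiv:1507.02370 — 3 statements merged into one kernel-verified Lean document; each statement's English description precedes it below -/
import Mathlib

section
/- Let G be a finite cyclic group, A a G-module, and B a G-submodule of finite index in A such that B is a finitely generated free abelian group with a G-invariant Z-basis X. Then #H¹(G, A) = (A^G : N_G A) / ∏_{x ∈ X/G} #G_x. -/
variable (G : Type*) [Group G] [Fintype G] (A : Type*) [AddCommGroup A] [DistribMulAction G A]

/-- The norm map `a ↦ ∑_{τ ∈ G} τ • a`. -/
noncomputable def normMap : A →+ A := ∑ τ : G, DistribMulAction.toAddMonoidHom A τ

/-- The map `a ↦ a - σ • a`. -/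
def oneSubMap (σ : G) : A →+ A := AddMonoidHom.id A - DistribMulAction.toAddMonoidHom A σ

/-- The subgroup of `G`-fixed points `A^G`. -/
def fixedSub : AddSubgroup A where
  carrier := {a | ∀ τ : G, τ • a = a}
  zero_mem' := fun τ => smul_zero τ
  add_mem' := fun ha hb τ => by rw [smul_add, ha τ, hb τ]
  neg_mem' := fun ha τ => by rw [smul_neg, ha τ]

/-- `#H¹(G,A)` for `G` cyclic with generator `σ`, computed as `#(ker N_G / (1-σ)A)`. -/
noncomputable def H1card (σ : G) : ℕ :=
  Nat.card ((normMap G A).ker ⧸ ((oneSubMap G A σ).range.addSubgroupOf (normMap G A).ker))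

/-- `#Ĥ⁰(G,A) = (A^G : N_G A)`. -/
noncomputable def H0card : ℕ :=
  Nat.card (fixedSub G A ⧸ ((normMap G A).range.addSubgroupOf (fixedSub G A)))

/-- The Herbrand quotient `h(G,A) = #Ĥ⁰(G,A) / #H¹(G,A)`. -/
noncomputable def herbrand (σ : G) : ℚ := (H0card G A : ℚ) / (H1card G A σ : ℚ)

/-!
For `G = ⟨σ⟩` we have `H¹(G, A) = ker N / (1 - σ)A` and `Ĥ⁰(G, A) = ker (1 - σ) / N A`. Comparing
the indices cut out by the two endomorphisms `1 - σ` and `N` on `A` and on a finite-index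
submodule `B` shows that the Herbrand quotient does not change: `h(B) = h(A)`.

For the permutation module `B = ℤ[X]` both groups are explicit. An element killed by `N` has
coordinate sum zero on every orbit, hence is a combination of the `b x - b (τ • x)`, which lie in
`(1 - σ)B`; so `H¹(G, B) = 0`. The invariants `B^G` are spanned by the orbit sums, and
`N (b x) = #G_x • (orbit sum of x)`, so reading the coordinate at a representative of each orbit
modulo `#G_x` identifies `B^G / N B` with `∏ ℤ/#G_x`.
-/

open MulAction Finset

section CyclicGroupModule

variable {G A}

lemma normMap_apply (a : A) : normMap G A a = ∑ τ : G, τ • a := by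
  simp [normMap]

omit [Fintype G] in
lemma mem_fixedSub {a : A} : a ∈ fixedSub G A ↔ ∀ τ : G, τ • a = a := Iff.rfl

omit [Fintype G] in
lemma oneSubMap_apply (σ : G) (a : A) : oneSubMap G A σ a = a - σ • a := rfl

lemma range_oneSubMap_le_ker_normMap (σ : G) :
    (oneSubMap G A σ).range ≤ (normMap G A).ker := by
  rintro _ ⟨a, rfl⟩
  rw [AddMonoidHom.mem_ker, oneSubMap_apply, map_sub, normMap_apply, normMap_apply, sub_eq_zero]
  exact Fintype.sum_equiv (Equiv.mulRight σ⁻¹) _ _ fun τ => by simp [smul_smul]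

lemma range_normMap_le_ker_oneSubMap (σ : G) :
    (normMap G A).range ≤ (oneSubMap G A σ).ker := by
  rintro _ ⟨a, rfl⟩
  rw [AddMonoidHom.mem_ker, oneSubMap_apply, sub_eq_zero, normMap_apply, smul_sum]
  exact Fintype.sum_equiv (Equiv.mulLeft σ⁻¹) _ _ fun τ => by simp [smul_smul]

lemma H1card_eq_relIndex (σ : G) :
    H1card G A σ = (oneSubMap G A σ).range.relIndex (normMap G A).ker := rfl

variable {σ : G} (hgen : ∀ τ : G, τ ∈ Subgroup.zpowers σ)
include hgen

omit [Fintype G] in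
lemma fixedSub_eq_ker_oneSubMap : fixedSub G A = (oneSubMap G A σ).ker := by
  ext a
  rw [AddMonoidHom.mem_ker, oneSubMap_apply, sub_eq_zero]
  refine ⟨fun h => (h σ).symm, fun h τ => ?_⟩
  have hσ : σ ∈ stabilizer G a := h.symm
  exact Subgroup.zpowers_le.mpr hσ (hgen τ)

lemma H0card_eq_relIndex :
    H0card G A = (normMap G A).range.relIndex (oneSubMap G A σ).ker := by
  rw [← fixedSub_eq_ker_oneSubMap hgen]
  rfl

lemma sub_smul_mem_range_oneSubMap (a : A) (τ : G) : a - τ • a ∈ (oneSubMap G A σ).range := by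
  obtain ⟨n, rfl⟩ : τ ∈ Submonoid.powers σ := mem_powers_iff_mem_zpowers.mpr (hgen τ)
  induction n with
  | zero => simp
  | succ n ih =>
    have hstep : a - σ ^ (n + 1) • a = (a - σ ^ n • a) + oneSubMap G A σ (σ ^ n • a) := by
      rw [oneSubMap_apply, pow_succ', mul_smul]
      abel
    exact hstep ▸ add_mem ih ⟨_, rfl⟩

end CyclicGroupModule

namespace AddSubgroup

variable {M : Type*} [AddCommGroup M]

lemma index_eq_relIndex_ker_mul_relIndex_range (f : M →+ M) (B : AddSubgroup M) :
    B.index = B.relIndex f.ker * (B.map f).relIndex f.range := by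
  have hsup : (f.ker ⊔ B).index = (B.map f).relIndex f.range := by
    rw [sup_comm, ← comap_map_eq, ← relIndex_top_right, relIndex_comap, ← f.range_eq_map]
  rw [← relIndex_mul_index (le_sup_right : B ≤ f.ker ⊔ B), relIndex_sup_right, hsup]

lemma relIndex_map_mul_relIndex_range (f g : M →+ M) (B : AddSubgroup M)
    (hgf : g.range ≤ f.ker) (hBg : B.map g ≤ B) :
    (B.map g).relIndex g.range * g.range.relIndex f.ker
      = (B.map g).relIndex (f.ker ⊓ B) * B.relIndex f.ker := by
  have hle : B.map g ≤ g.range := map_le_range g B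
  rw [relIndex_mul_relIndex _ _ _ hle hgf, ← inf_relIndex_right B f.ker, inf_comm B f.ker]
  exact (relIndex_mul_relIndex _ _ _ (le_inf (hle.trans hgf) hBg) inf_le_left).symm

theorem relIndex_map_mul_relIndex_eq_of_index_ne_zero (f g : M →+ M) (B : AddSubgroup M)
    (hgf : g.range ≤ f.ker) (hfg : f.range ≤ g.ker) (hBf : B.map f ≤ B) (hBg : B.map g ≤ B)
    (hB : B.index ≠ 0) :
    (B.map g).relIndex (f.ker ⊓ B) * f.range.relIndex g.ker
      = (B.map f).relIndex (g.ker ⊓ B) * g.range.relIndex f.ker := by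
  set h₀ := (B.map g).relIndex (f.ker ⊓ B)
  set h₁ := (B.map f).relIndex (g.ker ⊓ B)
  set ig := (B.map g).relIndex g.range
  set i_f := (B.map f).relIndex f.range
  have hg : ig * g.range.relIndex f.ker = h₀ * B.relIndex f.ker :=
    relIndex_map_mul_relIndex_range f g B hgf hBg
  have hf : i_f * f.range.relIndex g.ker = h₁ * B.relIndex g.ker :=
    relIndex_map_mul_relIndex_range g f B hfg hBf
  have hBf' : B.index = B.relIndex f.ker * i_f := index_eq_relIndex_ker_mul_relIndex_range f B
  have hBg' : B.index = B.relIndex g.ker * ig := index_eq_relIndex_ker_mul_relIndex_range g B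
  have hi : ig * i_f ≠ 0 :=
    mul_ne_zero (right_ne_zero_of_mul (hBg' ▸ hB)) (right_ne_zero_of_mul (hBf' ▸ hB))
  -- after multiplying by `ig * i_f`, both sides become `h₀ * h₁ * B.index`
  refine Nat.eq_of_mul_eq_mul_left (Nat.pos_of_ne_zero hi) ?_
  linear_combination h₀ * ig * hf - h₁ * i_f * hg + h₀ * h₁ * (hBf' - hBg')

lemma map_subtype_range_of_coe {B : AddSubgroup M} {f : M →+ M} {fB : B →+ B}
    (h : ∀ v, (fB v : M) = f v) : fB.range.map B.subtype = B.map f := by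
  have hcomp : B.subtype.comp fB = f.comp B.subtype := AddMonoidHom.ext h
  rw [fB.range_eq_map, map_map, hcomp, ← map_map, ← AddMonoidHom.range_eq_map, range_subtype]

lemma map_subtype_ker_of_coe {B : AddSubgroup M} {f : M →+ M} {fB : B →+ B}
    (h : ∀ v, (fB v : M) = f v) : fB.ker.map B.subtype = f.ker ⊓ B := by
  have hker : fB.ker = f.ker.comap B.subtype := by
    ext v
    rw [AddMonoidHom.mem_ker, mem_comap, AddMonoidHom.mem_ker, coe_subtype, ← h,
      ZeroMemClass.coe_eq_zero]
  rw [hker, map_comap_eq, range_subtype, inf_comm]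

lemma relIndex_range_ker_of_coe {B : AddSubgroup M} {f g : M →+ M} {fB gB : B →+ B}
    (hf : ∀ v, (fB v : M) = f v) (hg : ∀ v, (gB v : M) = g v) :
    gB.range.relIndex fB.ker = (B.map g).relIndex (f.ker ⊓ B) := by
  rw [← map_subtype_range_of_coe hg, ← map_subtype_ker_of_coe hf,
    relIndex_map_map_of_injective _ _ B.subtype_injective]

abbrev distribMulActionOfSMulMem {G : Type*} [Group G] [DistribMulAction G M] (B : AddSubgroup M)
    (hB : ∀ (τ : G), ∀ a ∈ B, τ • a ∈ B) : DistribMulAction G B where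
  smul τ v := ⟨τ • (v : M), hB τ v v.2⟩
  one_smul v := Subtype.ext (one_smul G (v : M))
  mul_smul τ τ' v := Subtype.ext (mul_smul τ τ' (v : M))
  smul_zero τ := Subtype.ext (smul_zero τ)
  smul_add τ v w := Subtype.ext (smul_add τ (v : M) w)

end AddSubgroup

section StableSubgroup

variable {G A} (B : AddSubgroup A) [DistribMulAction G B]
  (hB : ∀ (τ : G) (v : B), ((τ • v : B) : A) = τ • (v : A))
include hB

lemma coe_normMap_of_coe_smul (v : B) : (normMap G B v : A) = normMap G A v := by
  simp [normMap_apply, hB]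

omit [Fintype G] in
lemma coe_oneSubMap_of_coe_smul (σ : G) (v : B) :
    (oneSubMap G B σ v : A) = oneSubMap G A σ v := by
  simp [oneSubMap_apply, hB]

theorem H0card_mul_H1card_eq_of_index_ne_zero {σ : G} (hgen : ∀ τ : G, τ ∈ Subgroup.zpowers σ)
    (hBi : B.index ≠ 0) : H0card G B * H1card G A σ = H1card G B σ * H0card G A := by
  have hstab : ∀ (τ : G), ∀ a ∈ B, τ • a ∈ B := fun τ a ha => hB τ ⟨a, ha⟩ ▸ (τ • ⟨a, ha⟩ : B).2
  rw [H0card_eq_relIndex hgen, H0card_eq_relIndex hgen, H1card_eq_relIndex, H1card_eq_relIndex,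
    AddSubgroup.relIndex_range_ker_of_coe (coe_oneSubMap_of_coe_smul B hB σ)
      (coe_normMap_of_coe_smul B hB),
    AddSubgroup.relIndex_range_ker_of_coe (coe_normMap_of_coe_smul B hB)
      (coe_oneSubMap_of_coe_smul B hB σ)]
  refine AddSubgroup.relIndex_map_mul_relIndex_eq_of_index_ne_zero _ _ B
    (range_normMap_le_ker_oneSubMap σ) (range_oneSubMap_le_ker_normMap σ) ?_ ?_ hBi
  · rintro _ ⟨a, ha, rfl⟩
    exact sub_mem ha (hstab σ a ha)
  · rintro _ ⟨a, ha, rfl⟩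
    rw [normMap_apply]
    exact sum_mem fun τ _ => hstab τ a ha

end StableSubgroup

section PermutationModule

open scoped Classical

variable {G} {X : Type*} [MulAction G X]

omit [Fintype G] in
lemma exists_smul_eq_out (x : X) : ∃ τ : G, τ • x = (Quotient.mk (orbitRel G X) x).out :=
  Quotient.mk_out (s := orbitRel G X) x

lemma sum_smul_eq_card_stabilizer_nsmul_sum_orbit [Fintype X] {N : Type*} [AddCommMonoid N]
    (c : X → N) (y : X) : ∑ τ : G, c (τ • y) =
      Nat.card (stabilizer G y) • ∑ x with Quotient.mk _ x = Quotient.mk (orbitRel G X) y, c x := by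
  have himage : univ.image (fun τ : G => τ • y) =
      ({x | Quotient.mk _ x = Quotient.mk (orbitRel G X) y} : Finset X) := by
    ext x
    simp [Quotient.eq, orbitRel_apply, mem_orbit_iff]
  rw [sum_comp, himage, smul_sum]
  refine sum_congr rfl fun x hx => ?_
  obtain ⟨τ₀, rfl⟩ : ∃ τ₀ : G, τ₀ • y = x := by simpa [← himage] using hx
  congr 1
  rw [← Fintype.card_subtype, ← Nat.card_eq_fintype_card]
  exact Nat.card_congr <| (Equiv.mulLeft τ₀⁻¹).subtypeEquiv fun τ => by
    rw [mem_stabilizer_iff, Equiv.coe_mulLeft, mul_smul, inv_smul_eq_iff, eq_comm]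

variable {M : Type*} [AddCommGroup M] (b : Module.Basis X ℤ M)

noncomputable def orbitSum [Fintype X] (q : Quotient (orbitRel G X)) : M :=
  ∑ x with Quotient.mk _ x = q, b x

omit [Fintype G] in
lemma repr_orbitSum [Fintype X] (q : Quotient (orbitRel G X)) (x : X) :
    b.repr (orbitSum b q) x = if Quotient.mk _ x = q then 1 else 0 := by
  simp [orbitSum, Finsupp.single_apply]

variable (G) in
noncomputable def orbitCoordMod :
    M →+ ∀ q : Quotient (orbitRel G X), ZMod (Nat.card (stabilizer G q.out)) :=
  AddMonoidHom.pi fun q => (Int.castAddHom _).comp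
    ((Finsupp.applyAddHom q.out).comp b.repr.toAddMonoidHom)

variable [DistribMulAction G M] {b} (hb : ∀ (τ : G) (x : X), τ • b x = b (τ • x))
include hb

omit [Fintype G] in
lemma repr_smul (τ : G) (v : M) (y : X) : b.repr (τ • v) y = b.repr v (τ⁻¹ • y) := by
  have hext := b.ext (f₁ := Finsupp.lapply y ∘ₗ b.repr.toLinearMap ∘ₗ
      (DistribSMul.toAddMonoidHom M τ).toIntLinearMap)
    (f₂ := Finsupp.lapply (τ⁻¹ • y) ∘ₗ b.repr.toLinearMap)
    fun x => by simp [hb, Finsupp.single_apply, eq_inv_smul_iff]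
  exact LinearMap.congr_fun hext v

omit [Fintype G] in
lemma repr_smul_of_mem_fixedSub {v : M} (hv : v ∈ fixedSub G M) (τ : G) (y : X) :
    b.repr v (τ • y) = b.repr v y := by
  simpa [mem_fixedSub.mp hv τ⁻¹] using (repr_smul hb τ⁻¹ v y).symm

lemma repr_normMap (v : M) (y : X) : b.repr (normMap G M v) y = ∑ τ : G, b.repr v (τ • y) := by
  rw [normMap_apply, map_sum, Finsupp.finsetSum_apply]
  exact Fintype.sum_equiv (Equiv.inv G) _ _ fun τ => repr_smul hb τ v y

variable [Fintype X]

lemma normMap_basis_eq_nsmul_orbitSum (y : X) :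
    normMap G M (b y) = Nat.card (stabilizer G y) • orbitSum b (Quotient.mk (orbitRel G X) y) := by
  simp only [normMap_apply, hb]
  exact sum_smul_eq_card_stabilizer_nsmul_sum_orbit (fun x => b x) y

omit [Fintype G] in
lemma orbitSum_mem_fixedSub (q : Quotient (orbitRel G X)) : orbitSum b q ∈ fixedSub G M := by
  refine mem_fixedSub.mpr fun τ => ?_
  rw [orbitSum, smul_sum, sum_filter, sum_filter]
  exact Fintype.sum_equiv (toPerm τ) _ _ fun x => by simp [hb]

omit [Fintype G] in
lemma eq_sum_orbitSum_of_mem_fixedSub {v : M} (hv : v ∈ fixedSub G M) :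
    v = ∑ q : Quotient (orbitRel G X), b.repr v q.out • orbitSum b q := by
  conv_lhs => rw [← b.sum_repr v, ← sum_fiberwise univ (Quotient.mk (orbitRel G X))]
  refine sum_congr rfl fun q _ => ?_
  rw [orbitSum, smul_sum]
  refine sum_congr rfl fun x hx => ?_
  obtain ⟨τ, hτ⟩ := exists_smul_eq_out (G := G) x
  rw [(mem_filter.mp hx).2] at hτ
  rw [← hτ, repr_smul_of_mem_fixedSub hb hv]

theorem ker_normMap_le_range_oneSubMap {σ : G} (hgen : ∀ τ : G, τ ∈ Subgroup.zpowers σ) :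
    (normMap G M).ker ≤ (oneSubMap G M σ).range := by
  intro v hv
  have horbit : ∀ q : Quotient (orbitRel G X), ∑ x with Quotient.mk _ x = q, b.repr v x = 0 := by
    intro q
    have h := repr_normMap hb v q.out
    rw [AddMonoidHom.mem_ker.mp hv, map_zero, Finsupp.zero_apply,
      sum_smul_eq_card_stabilizer_nsmul_sum_orbit, Quotient.out_eq] at h
    exact (smul_eq_zero.mp h.symm).resolve_left Nat.card_pos.ne'
  have hdecomp : v = ∑ x, b.repr v x • (b x - b (Quotient.mk (orbitRel G X) x).out) := by
    have hzero : ∑ x, b.repr v x • b (Quotient.mk (orbitRel G X) x).out = 0 := by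
      rw [← sum_fiberwise univ (Quotient.mk (orbitRel G X))]
      refine sum_eq_zero fun q _ => ?_
      rw [sum_congr rfl fun x hx => by rw [(mem_filter.mp hx).2], ← sum_smul, horbit q, zero_smul]
    simp only [smul_sub, sum_sub_distrib, hzero, sub_zero, b.sum_repr]
  rw [hdecomp]
  refine sum_mem fun x _ => zsmul_mem ?_ _
  obtain ⟨τ, hτ⟩ := exists_smul_eq_out (G := G) x
  rw [← hτ, ← hb]
  exact sub_smul_mem_range_oneSubMap hgen (b x) τ

theorem H1card_eq_one_of_basis {σ : G} (hgen : ∀ τ : G, τ ∈ Subgroup.zpowers σ) :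
    H1card G M σ = 1 := by
  rw [H1card_eq_relIndex, AddSubgroup.relIndex_eq_one]
  exact ker_normMap_le_range_oneSubMap hb hgen

lemma mem_range_normMap_iff_of_mem_fixedSub {v : M} (hv : v ∈ fixedSub G M) :
    v ∈ (normMap G M).range ↔
      ∀ q : Quotient (orbitRel G X), (Nat.card (stabilizer G q.out) : ℤ) ∣ b.repr v q.out := by
  constructor
  · rintro ⟨w, rfl⟩ q
    rw [repr_normMap hb, sum_smul_eq_card_stabilizer_nsmul_sum_orbit, nsmul_eq_mul]
    exact dvd_mul_right _ _
  · intro hdvd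
    choose m hm using hdvd
    refine ⟨∑ q, m q • b q.out, ?_⟩
    rw [map_sum, eq_sum_orbitSum_of_mem_fixedSub hb hv]
    refine sum_congr rfl fun q _ => ?_
    rw [map_zsmul, normMap_basis_eq_nsmul_orbitSum hb, Quotient.out_eq, hm q, mul_comm, mul_smul,
      natCast_zsmul]

lemma ker_orbitCoordMod_inf_fixedSub :
    (orbitCoordMod G b).ker ⊓ fixedSub G M = (normMap G M).range ⊓ fixedSub G M := by
  ext v
  simp only [AddSubgroup.mem_inf]
  refine and_congr_left fun hv => ?_
  rw [mem_range_normMap_iff_of_mem_fixedSub hb hv, AddMonoidHom.mem_ker, funext_iff]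
  simp [orbitCoordMod, ZMod.intCast_zmod_eq_zero_iff_dvd]

omit [Fintype G] in
lemma map_fixedSub_orbitCoordMod : (fixedSub G M).map (orbitCoordMod G b) = ⊤ := by
  refine eq_top_iff.mpr fun t _ => ⟨∑ q, (t q).cast • orbitSum b q,
    sum_mem fun q _ => zsmul_mem (orbitSum_mem_fixedSub hb q) _, ?_⟩
  funext q'
  simp [orbitCoordMod, repr_orbitSum]

theorem H0card_eq_finprod_card_stabilizer :
    H0card G M = ∏ᶠ q : Quotient (orbitRel G X), Nat.card (stabilizer G q.out) := by
  rw [finprod_eq_prod_of_fintype,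
    show H0card G M = (normMap G M).range.relIndex (fixedSub G M) from rfl,
    ← AddSubgroup.inf_relIndex_right, ← ker_orbitCoordMod_inf_fixedSub hb,
    AddSubgroup.inf_relIndex_right, AddSubgroup.relIndex_ker, map_fixedSub_orbitCoordMod hb,
    AddSubgroup.card_top, Nat.card_pi]
  simp [Nat.card_zmod]

end PermutationModule

/-- Let `G` be a finite cyclic group (generator `σ`), `A` a `G`-module and
`B` a `G`-stable subgroup of finite index in `A` which is free abelian with a `G`-invariant
`ℤ`-basis `X`.  Then `#H¹(G,A) = (A^G : N_G A) / ∏_{x ∈ X/G} #G_x`. -/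
theorem h1_card_eq_index_div_prod_card_stabilizer
    (σ : G) (hgen : ∀ τ : G, τ ∈ Subgroup.zpowers σ)
    (B : AddSubgroup A) (hstab : ∀ (τ : G), ∀ a ∈ B, τ • a ∈ B) [Finite (A ⧸ B)]
    (X : Type*) [Finite X] [MulAction G X] (b : Module.Basis X ℤ B)
    (hb : ∀ (τ : G) (x : X), τ • (b x : A) = (b (τ • x) : A)) :
    (H1card G A σ : ℚ) =
      (H0card G A : ℚ) /
        (∏ᶠ q : Quotient (MulAction.orbitRel G X),
          Nat.card (MulAction.stabilizer G q.out) : ℕ) := by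
  let := Fintype.ofFinite X
  let := B.distribMulActionOfSMulMem hstab
  have hbB : ∀ (τ : G) (x : X), τ • b x = b (τ • x) := fun τ x => Subtype.ext (hb τ x)
  have hherbrand := H0card_mul_H1card_eq_of_index_ne_zero B (fun _ _ => rfl) hgen
    AddSubgroup.index_ne_zero_of_finite
  rw [H0card_eq_finprod_card_stabilizer hbB, H1card_eq_one_of_basis hbB hgen, one_mul] at hherbrand
  have hprod : (∏ᶠ q : Quotient (orbitRel G X), Nat.card (stabilizer G q.out)) ≠ 0 :=
    finprod_ne_zero fun _ => Nat.card_pos.ne'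
  rw [eq_div_iff (by exact_mod_cast hprod), mul_comm]
  exact_mod_cast hherbrand
end

section
/- Let G = {1, σ} be a group of order 2 and A a G-module that is a finitely generated abelian group with rank(A^G) = 0 and A^G[2] = {0}. Then A = A⁺ + A⁻ and #H¹(G, A) = 2^{rank(A)}. -/
variable (G : Type*) [Group G] [Fintype G] (A : Type*) [AddCommGroup A] [DistribMulAction G A]

/-- The subgroup `A⁻ = {a | σ • a = -a}`. -/
def minusSub (σ : G) : AddSubgroup A where
  carrier := {a | σ • a = -a}
  zero_mem' := by simp
  add_mem' := fun {a b} ha hb => by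
    simp only [Set.mem_setOf_eq] at *; rw [smul_add, ha, hb, neg_add]
  neg_mem' := fun {a} ha => by
    simp only [Set.mem_setOf_eq] at *; rw [smul_neg, ha, neg_neg]

/-!
Since `σ² = 1`, the element `a + σ • a` is fixed for every `a`. The fixed group `A^G` is finitely
generated of rank `0`, hence finite, and has no `2`-torsion, so doubling is bijective on it: writing
`a + σ • a = 2 • c` with `c ∈ A^G` gives `a - c ∈ A⁻`. As `A^G ∩ A⁻ ⊆ A^G[2] = 0`, this makes
`A = A^G ⊕ A⁻`. The kernel of the norm `1 + σ` is `A⁻`, and `1 - σ` sends `c + m` to `2 • m`, so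
`H¹ = A⁻ / 2A⁻`. Finally `A⁻` has the same rank as `A` and no `2`-torsion, and for a finitely
generated group `M` without `n`-torsion, `M / nM ≅ (M / M_tors) / n(M / M_tors)` has order
`n ^ rank M` because the finite torsion subgroup is `n`-divisible.
-/

open Module

lemma AddSubgroup.index_range_nsmul_of_injective {M : Type*} [AddCommGroup M] [Module.Finite ℤ M]
    {n : ℕ} (hn : Function.Injective fun x : M => n • x) :
    (nsmulAddMonoidHom (α := M) n).range.index = n ^ finrank ℤ M := by
  set t := Submodule.torsion ℤ M
  have : Finite t := Module.finite_of_fg_torsion _ Submodule.torsion_isTorsion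
  have ht : Function.Surjective fun s : t => n • s := Finite.injective_iff_surjective.mp
    fun s s' h => Subtype.ext (hn congr(($h : M)))
  have hcomap : (nsmulAddMonoidHom (α := M ⧸ t) n).range.comap t.mkQ.toAddMonoidHom =
      (nsmulAddMonoidHom (α := M) n).range := by
    ext x
    simp only [AddSubgroup.mem_comap, AddMonoidHom.mem_range, nsmulAddMonoidHom_apply]
    constructor
    · rintro ⟨y, hy⟩
      obtain ⟨y, rfl⟩ := t.mkQ_surjective y
      have hxy : x - n • y ∈ t := (Submodule.Quotient.eq t).mp (by simpa using hy.symm)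
      obtain ⟨⟨s, _⟩, hs⟩ := ht ⟨_, hxy⟩
      have hs : n • s = x - n • y := congr_arg Subtype.val hs
      exact ⟨y + s, by rw [nsmul_add, hs, add_sub_cancel]⟩
    · rintro ⟨y, rfl⟩
      exact ⟨t.mkQ y, by simp⟩
  rw [← hcomap, AddSubgroup.index_comap_of_surjective _ t.mkQ_surjective, index_range_nsmul,
    ← Submodule.finrank_quotient_add_finrank t,
    (finrank_eq_zero_iff_isTorsion.mpr Submodule.torsion_isTorsion : finrank ℤ t = 0), add_zero]

lemma AddSubgroup.exists_nsmul_eq_of_finite {M : Type*} [AddCommGroup M] {H : AddSubgroup M}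
    [Finite H] {n : ℕ} (h : ∀ a ∈ H, n • a = 0 → a = 0) (b : M) (hb : b ∈ H) :
    ∃ c ∈ H, n • c = b := by
  have hinj : Function.Injective (nsmulAddMonoidHom (α := H) n) :=
    (injective_iff_map_eq_zero _).mpr fun a ha => Subtype.ext (h a a.2 (congr_arg Subtype.val ha))
  obtain ⟨c, hc⟩ := Finite.injective_iff_surjective.mp hinj ⟨b, hb⟩
  exact ⟨c, c.2, congr_arg Subtype.val hc⟩

universe u in
lemma Submodule.finrank_add_finrank_of_isCompl {R : Type*} {M : Type u} [Ring R]
    [StrongRankCondition R] [HasRankNullity.{u} R] [AddCommGroup M] [Module R M]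
    [Module.Finite R M] {p q : Submodule R M} (h : IsCompl p q) :
    finrank R p + finrank R q = finrank R M := by
  rw [← p.finrank_quotient_add_finrank, (p.quotientEquivOfIsCompl q h).finrank_eq, add_comm]

lemma eq_one_or_eq_of_card_eq_two {H : Type*} [Group H] (hH : Nat.card H = 2) {σ : H}
    (hσ : σ ≠ 1) (τ : H) : τ = 1 ∨ τ = σ :=
  or_iff_not_imp_left.mpr fun hτ => ((Nat.card_eq_two_iff' 1).mp hH).unique hτ hσ

lemma mul_self_eq_one_of_card_eq_two {H : Type*} [Group H] (hH : Nat.card H = 2) (σ : H) :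
    σ * σ = 1 := by
  rw [← sq, ← hH, pow_card_eq_one']

section Decomposition

variable {G A} {σ : G}

omit [Fintype G]

lemma mem_minusSub_iff {a : A} : a ∈ minusSub G A σ ↔ σ • a = -a := Iff.rfl

lemma mem_fixedSub_iff (hG : Nat.card G = 2) (hσ : σ ≠ 1) {a : A} :
    a ∈ fixedSub G A ↔ σ • a = a := by
  refine ⟨fun ha => ha σ, fun ha τ => ?_⟩
  rcases eq_one_or_eq_of_card_eq_two hG hσ τ with rfl | rfl
  exacts [one_smul G a, ha]

lemma add_smul_mem_fixedSub (hG : Nat.card G = 2) (hσ : σ ≠ 1) (a : A) :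
    a + σ • a ∈ fixedSub G A := by
  rw [mem_fixedSub_iff hG hσ, smul_add, smul_smul, mul_self_eq_one_of_card_eq_two hG, one_smul,
    add_comm]

lemma exists_mem_fixedSub_sub_mem_minusSub (hG : Nat.card G = 2) (hσ : σ ≠ 1)
    (hhalf : ∀ b ∈ fixedSub G A, ∃ c ∈ fixedSub G A, 2 • c = b) (a : A) :
    ∃ c ∈ fixedSub G A, a - c ∈ minusSub G A σ := by
  obtain ⟨c, hc, hcc⟩ := hhalf _ (add_smul_mem_fixedSub hG hσ a)
  have hσa : σ • a = 2 • c - a := by rw [hcc, add_sub_cancel_left]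
  refine ⟨c, hc, ?_⟩
  rw [mem_minusSub_iff, smul_sub, (mem_fixedSub_iff hG hσ).mp hc, hσa, two_nsmul]
  abel

lemma isCompl_fixedSub_minusSub (hG : Nat.card G = 2) (hσ : σ ≠ 1)
    (hhalf : ∀ b ∈ fixedSub G A, ∃ c ∈ fixedSub G A, 2 • c = b)
    (htor : ∀ a ∈ fixedSub G A, 2 • a = 0 → a = 0) :
    IsCompl (fixedSub G A) (minusSub G A σ) := by
  constructor
  · rw [AddSubgroup.disjoint_def]
    intro a hfix hminus
    refine htor a hfix ?_
    rw [two_nsmul]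
    nth_rw 1 [← hfix σ, hminus, neg_add_cancel]
  · rw [codisjoint_iff, AddSubgroup.eq_top_iff']
    intro a
    obtain ⟨c, hc, hm⟩ := exists_mem_fixedSub_sub_mem_minusSub hG hσ hhalf a
    exact AddSubgroup.mem_sup.mpr ⟨c, hc, a - c, hm, add_sub_cancel c a⟩

lemma two_nsmul_injective_minusSub (hG : Nat.card G = 2) (hσ : σ ≠ 1)
    (htor : ∀ a ∈ fixedSub G A, 2 • a = 0 → a = 0) :
    Function.Injective fun m : minusSub G A σ => 2 • m := by
  refine (injective_iff_map_eq_zero (nsmulAddMonoidHom (α := minusSub G A σ) 2)).mpr ?_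
  rintro ⟨m, hm⟩ h2m
  have h2m : 2 • m = 0 := congr_arg Subtype.val h2m
  have hfix : m ∈ fixedSub G A := by
    rw [mem_fixedSub_iff hG hσ, hm, neg_eq_of_add_eq_zero_left (two_nsmul m ▸ h2m)]
  exact Subtype.ext (htor m hfix h2m)

lemma range_oneSubMap_addSubgroupOf_minusSub (hG : Nat.card G = 2) (hσ : σ ≠ 1)
    (hhalf : ∀ b ∈ fixedSub G A, ∃ c ∈ fixedSub G A, 2 • c = b) :
    (oneSubMap G A σ).range.addSubgroupOf (minusSub G A σ) =
      (nsmulAddMonoidHom (α := minusSub G A σ) 2).range := by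
  ext ⟨x, hx⟩
  rw [AddSubgroup.mem_addSubgroupOf, AddMonoidHom.mem_range, AddMonoidHom.mem_range]
  constructor
  · rintro ⟨a, rfl⟩
    obtain ⟨c, hc, hm⟩ := exists_mem_fixedSub_sub_mem_minusSub hG hσ hhalf a
    refine ⟨⟨a - c, hm⟩, Subtype.ext ?_⟩
    show 2 • (a - c) = a - σ • a
    have hσa : σ • a = c - (a - c) :=
      calc σ • a = σ • c + σ • (a - c) := by rw [← smul_add, add_sub_cancel]
        _ = c - (a - c) := by rw [hc σ, hm]; abel
    rw [hσa, two_nsmul]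
    abel
  · rintro ⟨⟨y, hy⟩, hxy⟩
    refine ⟨y, ?_⟩
    rw [← congr_arg Subtype.val hxy]
    show y - σ • y = 2 • y
    rw [mem_minusSub_iff.mp hy, sub_neg_eq_add, two_nsmul]

end Decomposition

section Cohomology

variable {G A} {σ : G}

lemma normMap_apply_s5 (hG : Nat.card G = 2) (hσ : σ ≠ 1) (a : A) : normMap G A a = a + σ • a := by
  simp [normMap, Fintype.sum_eq_add 1 σ hσ.symm fun τ hτ =>
    ((eq_one_or_eq_of_card_eq_two hG hσ τ).elim hτ.1 hτ.2).elim]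

lemma ker_normMap (hG : Nat.card G = 2) (hσ : σ ≠ 1) : (normMap G A).ker = minusSub G A σ := by
  ext a
  rw [AddMonoidHom.mem_ker, normMap_apply_s5 hG hσ, mem_minusSub_iff, add_eq_zero_iff_eq_neg']

lemma H1card_eq_index (hG : Nat.card G = 2) (hσ : σ ≠ 1)
    (hhalf : ∀ b ∈ fixedSub G A, ∃ c ∈ fixedSub G A, 2 • c = b) :
    H1card G A σ = (nsmulAddMonoidHom (α := minusSub G A σ) 2).range.index := by
  rw [H1card, ker_normMap hG hσ, range_oneSubMap_addSubgroupOf_minusSub hG hσ hhalf]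
  rfl

end Cohomology

/-- For `G = {1, σ}` of order 2 and `A` a finitely generated `G`-module with
`rank A^G = 0` and `A^G[2] = 0`, one has `A = A⁺ + A⁻` and `#H¹(G,A) = 2^{rank A}`. -/
theorem sup_plus_minus_eq_top_and_h1_card_eq_two_pow_rank
    (hG : Nat.card G = 2) (σ : G) (hσ : σ ≠ 1) [AddGroup.FG A]
    (hrk : Module.finrank ℤ (fixedSub G A) = 0)
    (htor : ∀ a ∈ fixedSub G A, 2 • a = 0 → a = 0) :
    fixedSub G A ⊔ minusSub G A σ = ⊤ ∧
      H1card G A σ = 2 ^ (Module.finrank ℤ A) := by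
  have : Module.Finite ℤ A := Module.Finite.iff_addGroup_fg.mpr ‹_›
  have (H : AddSubgroup A) : Module.Finite ℤ H :=
    inferInstanceAs (Module.Finite ℤ H.toIntSubmodule)
  have : Finite (fixedSub G A) :=
    Module.finite_of_fg_torsion _ (finrank_eq_zero_iff_isTorsion.mp hrk)
  have hhalf := AddSubgroup.exists_nsmul_eq_of_finite htor
  have hcompl := isCompl_fixedSub_minusSub hG hσ hhalf htor
  refine ⟨hcompl.sup_eq_top, ?_⟩
  have hrank : finrank ℤ (fixedSub G A) + finrank ℤ (minusSub G A σ) = finrank ℤ A :=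
    Submodule.finrank_add_finrank_of_isCompl (AddSubgroup.toIntSubmodule.isCompl hcompl)
  rw [H1card_eq_index hG hσ hhalf,
    AddSubgroup.index_range_nsmul_of_injective (two_nsmul_injective_minusSub hG hσ htor),
    ← hrank, hrk, zero_add]
end

section
/- Let G be a finite cyclic group with generator σ, and A a G-module that is a finitely generated abelian group. Then (NA : n·A^G) = (A : A^G + ₙA) = ((1-σ)A : (1-σ)(ₙA)), where n = #G, N = Σ_{τ∈G} τ, ₙA = ker(N), NA = im(N). -/
/-!
Put `S = A^G + ₙA`. If a homomorphism `f` has `ker f ≤ S`, then `(A : S) = (f A : f S)`. This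
applies to `f = N`, whose kernel is `ₙA` and which acts on `A^G` as multiplication by `n`, so that
`N S = n·A^G`; and to `f = 1 - σ`, whose kernel is `A^G` because `σ` generates `G`, so that
`(1-σ) S = (1-σ)(ₙA)`.
-/

variable (G : Type*) [Group G] [Fintype G] (A : Type*) [AddCommGroup A] [DistribMulAction G A]

theorem AddSubgroup.relIndex_map_range_of_ker_le {A B : Type*} [AddGroup A] [AddGroup B]
    {f : A →+ B} {S : AddSubgroup A} (h : f.ker ≤ S) :
    (S.map f).relIndex f.range = S.index := by
  rw [← AddSubgroup.index_comap, AddSubgroup.comap_map_eq_self h]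

theorem normMap_eq_card_smul_of_mem_fixedSub {a : A} (ha : a ∈ fixedSub G A) :
    normMap G A a = Fintype.card G • a := by
  simp [normMap, Finset.sum_congr rfl fun τ _ => ha τ]

theorem map_normMap_fixedSub :
    (fixedSub G A).map (normMap G A) = (fixedSub G A).map (Fintype.card G • AddMonoidHom.id A) :=
  SetLike.coe_injective <| Set.image_congr fun _ ha => by
    simpa using normMap_eq_card_smul_of_mem_fixedSub G A ha

omit [Fintype G] in
theorem ker_oneSubMap {σ : G} (hgen : ∀ τ : G, τ ∈ Subgroup.zpowers σ) :
    (oneSubMap G A σ).ker = fixedSub G A := by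
  ext a
  simp only [AddMonoidHom.mem_ker, oneSubMap, AddMonoidHom.sub_apply, AddMonoidHom.id_apply,
    DistribMulAction.toAddMonoidHom_apply, sub_eq_zero]
  refine ⟨fun h τ => ?_, fun h => (h σ).symm⟩
  have hσ : σ ∈ MulAction.stabilizer G a := MulAction.mem_stabilizer_iff.mpr h.symm
  exact MulAction.mem_stabilizer_iff.mp (Subgroup.zpowers_le.mpr hσ (hgen τ))

theorem index_eq_index_eq_index
    (σ : G) (hgen : ∀ τ : G, τ ∈ Subgroup.zpowers σ) (n : ℕ) (hn : n = Fintype.card G) :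
    Nat.card ((normMap G A).range ⧸
        ((AddSubgroup.map (n • AddMonoidHom.id A) (fixedSub G A)).addSubgroupOf
          (normMap G A).range)) =
      Nat.card (A ⧸ (fixedSub G A ⊔ (normMap G A).ker)) ∧
    Nat.card (A ⧸ (fixedSub G A ⊔ (normMap G A).ker)) =
      Nat.card ((oneSubMap G A σ).range ⧸
        ((AddSubgroup.map (oneSubMap G A σ) (normMap G A).ker).addSubgroupOf
          (oneSubMap G A σ).range)) := by
  have hnorm : (fixedSub G A ⊔ (normMap G A).ker).map (normMap G A) =
      (fixedSub G A).map (n • AddMonoidHom.id A) := by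
    rw [AddSubgroup.map_sup, (AddSubgroup.map_eq_bot_iff _).mpr le_rfl, sup_bot_eq, hn,
      map_normMap_fixedSub]
  have honeSub : (fixedSub G A ⊔ (normMap G A).ker).map (oneSubMap G A σ) =
      (normMap G A).ker.map (oneSubMap G A σ) := by
    rw [AddSubgroup.map_sup, ← ker_oneSubMap G A hgen, (AddSubgroup.map_eq_bot_iff _).mpr le_rfl,
      bot_sup_eq]
  refine ⟨?_, ?_⟩
  · rw [← hnorm]
    exact AddSubgroup.relIndex_map_range_of_ker_le le_sup_right
  · rw [← honeSub]
    exact (AddSubgroup.relIndex_map_range_of_ker_le (ker_oneSubMap G A hgen ▸ le_sup_left)).symm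
end
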